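/- arXiv:2302.04721 — 3 statements merged into one kernel-verified Lean document; each statement's English description precedes it below -/
import Mathlib

section
/- Every real 2×2 matrix whose Frobenius norm (2-norm of the vectorized matrix) is at most 1 lies in the convex hull of the eight matrices of the form (aₓ·b_y)ₓ,y with a₁,a₂,b₁,b₂ ∈ {−1,+1}. -/
noncomputable def lpAvec : Fin 8 → Fin 2 → ℝ :=
  ![![1,1],![-1,-1],![1,-1],![-1,1],![1,1],![-1,-1],![1,-1],![-1,1]]

noncomputable def lpBvec : Fin 8 → Fin 2 → ℝ :=
  ![![1,1],![1,1],![1,1],![1,1],![1,-1],![1,-1],![1,-1],![1,-1]]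

noncomputable def lpZ : Fin 8 → Matrix (Fin 2) (Fin 2) ℝ :=
  fun i => fun x y => lpAvec i x * lpBvec i y

noncomputable def lpW (c1 c2 c3 c4 : ℝ) : Fin 8 → ℝ :=
  ![(|c1| + c1)/2 + (1 - (|c1| + |c2| + |c3| + |c4|))/2,
    (|c1| - c1)/2 + (1 - (|c1| + |c2| + |c3| + |c4|))/2,
    (|c2| + c2)/2, (|c2| - c2)/2, (|c3| + c3)/2, (|c3| - c3)/2,
    (|c4| + c4)/2, (|c4| - c4)/2]

lemma lpZ_mem : ∀ i ∈ (Finset.univ : Finset (Fin 8)),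
    lpZ i ∈ {d : Matrix (Fin 2) (Fin 2) ℝ |
      ∃ a b : Fin 2 → ℝ, (∀ x, a x = 1 ∨ a x = -1) ∧ (∀ y, b y = 1 ∨ b y = -1) ∧
        d = fun x y => a x * b y} := by
  intro i _
  fin_cases i
  · exact ⟨(![1,1] : Fin 2 → ℝ), (![1,1] : Fin 2 → ℝ), fun x => by fin_cases x <;> norm_num,
      fun y => by fin_cases y <;> norm_num, rfl⟩
  · exact ⟨(![-1,-1] : Fin 2 → ℝ), (![1,1] : Fin 2 → ℝ), fun x => by fin_cases x <;> norm_num,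
      fun y => by fin_cases y <;> norm_num, rfl⟩
  · exact ⟨(![1,-1] : Fin 2 → ℝ), (![1,1] : Fin 2 → ℝ), fun x => by fin_cases x <;> norm_num,
      fun y => by fin_cases y <;> norm_num, rfl⟩
  · exact ⟨(![-1,1] : Fin 2 → ℝ), (![1,1] : Fin 2 → ℝ), fun x => by fin_cases x <;> norm_num,
      fun y => by fin_cases y <;> norm_num, rfl⟩
  · exact ⟨(![1,1] : Fin 2 → ℝ), (![1,-1] : Fin 2 → ℝ), fun x => by fin_cases x <;> norm_num,
      fun y => by fin_cases y <;> norm_num, rfl⟩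
  · exact ⟨(![-1,-1] : Fin 2 → ℝ), (![1,-1] : Fin 2 → ℝ), fun x => by fin_cases x <;> norm_num,
      fun y => by fin_cases y <;> norm_num, rfl⟩
  · exact ⟨(![1,-1] : Fin 2 → ℝ), (![1,-1] : Fin 2 → ℝ), fun x => by fin_cases x <;> norm_num,
      fun y => by fin_cases y <;> norm_num, rfl⟩
  · exact ⟨(![-1,1] : Fin 2 → ℝ), (![1,-1] : Fin 2 → ℝ), fun x => by fin_cases x <;> norm_num,
      fun y => by fin_cases y <;> norm_num, rfl⟩

lemma lpW_nonneg (c1 c2 c3 c4 : ℝ) (habs : |c1| + |c2| + |c3| + |c4| ≤ 1) :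
    ∀ i ∈ (Finset.univ : Finset (Fin 8)), 0 ≤ lpW c1 c2 c3 c4 i := by
  intro i _
  fin_cases i
  · show (0:ℝ) ≤ (|c1| + c1)/2 + (1 - (|c1| + |c2| + |c3| + |c4|))/2
    nlinarith [neg_abs_le c1, le_abs_self c1]
  · show (0:ℝ) ≤ (|c1| - c1)/2 + (1 - (|c1| + |c2| + |c3| + |c4|))/2
    nlinarith [neg_abs_le c1, le_abs_self c1]
  · show (0:ℝ) ≤ (|c2| + c2)/2
    nlinarith [neg_abs_le c2]
  · show (0:ℝ) ≤ (|c2| - c2)/2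
    nlinarith [le_abs_self c2]
  · show (0:ℝ) ≤ (|c3| + c3)/2
    nlinarith [neg_abs_le c3]
  · show (0:ℝ) ≤ (|c3| - c3)/2
    nlinarith [le_abs_self c3]
  · show (0:ℝ) ≤ (|c4| + c4)/2
    nlinarith [neg_abs_le c4]
  · show (0:ℝ) ≤ (|c4| - c4)/2
    nlinarith [le_abs_self c4]

lemma lpW_sum (c1 c2 c3 c4 : ℝ) : ∑ i, lpW c1 c2 c3 c4 i = 1 := by
  rw [Fin.sum_univ_eight]
  show (|c1| + c1)/2 + (1 - (|c1| + |c2| + |c3| + |c4|))/2 +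
    ((|c1| - c1)/2 + (1 - (|c1| + |c2| + |c3| + |c4|))/2) + (|c2| + c2)/2 + (|c2| - c2)/2 +
    (|c3| + c3)/2 + (|c3| - c3)/2 + (|c4| + c4)/2 + (|c4| - c4)/2 = 1
  ring

lemma lpW_combo (c1 c2 c3 c4 : ℝ) :
    ∑ i, lpW c1 c2 c3 c4 i • lpZ i =
      fun x y => (![![c1 + c2 + c3 + c4, c1 + c2 - c3 - c4],
        ![c1 - c2 + c3 - c4, c1 - c2 - c3 + c4]] : Matrix (Fin 2) (Fin 2) ℝ) x y := by
  funext x y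
  have e : (∑ i, lpW c1 c2 c3 c4 i • lpZ i) x y =
      ∑ i, lpW c1 c2 c3 c4 i * (lpAvec i x * lpBvec i y) := by
    simp [Matrix.sum_apply, Matrix.smul_apply, smul_eq_mul, lpZ]
  rw [e, Fin.sum_univ_eight]
  fin_cases x <;> fin_cases y
  · show ((|c1| + c1)/2 + (1 - (|c1| + |c2| + |c3| + |c4|))/2) * ((1 : ℝ) * (1 : ℝ)) +
        ((|c1| - c1)/2 + (1 - (|c1| + |c2| + |c3| + |c4|))/2) * ((-1 : ℝ) * (1 : ℝ)) +
        ((|c2| + c2)/2) * ((1 : ℝ) * (1 : ℝ)) +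
        ((|c2| - c2)/2) * ((-1 : ℝ) * (1 : ℝ)) +
        ((|c3| + c3)/2) * ((1 : ℝ) * (1 : ℝ)) +
        ((|c3| - c3)/2) * ((-1 : ℝ) * (1 : ℝ)) +
        ((|c4| + c4)/2) * ((1 : ℝ) * (1 : ℝ)) +
        ((|c4| - c4)/2) * ((-1 : ℝ) * (1 : ℝ)) = c1 + c2 + c3 + c4
    ring
  · show ((|c1| + c1)/2 + (1 - (|c1| + |c2| + |c3| + |c4|))/2) * ((1 : ℝ) * (1 : ℝ)) +
        ((|c1| - c1)/2 + (1 - (|c1| + |c2| + |c3| + |c4|))/2) * ((-1 : ℝ) * (1 : ℝ)) +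
        ((|c2| + c2)/2) * ((1 : ℝ) * (1 : ℝ)) +
        ((|c2| - c2)/2) * ((-1 : ℝ) * (1 : ℝ)) +
        ((|c3| + c3)/2) * ((1 : ℝ) * (-1 : ℝ)) +
        ((|c3| - c3)/2) * ((-1 : ℝ) * (-1 : ℝ)) +
        ((|c4| + c4)/2) * ((1 : ℝ) * (-1 : ℝ)) +
        ((|c4| - c4)/2) * ((-1 : ℝ) * (-1 : ℝ)) = c1 + c2 - c3 - c4
    ring
  · show ((|c1| + c1)/2 + (1 - (|c1| + |c2| + |c3| + |c4|))/2) * ((1 : ℝ) * (1 : ℝ)) +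
        ((|c1| - c1)/2 + (1 - (|c1| + |c2| + |c3| + |c4|))/2) * ((-1 : ℝ) * (1 : ℝ)) +
        ((|c2| + c2)/2) * ((-1 : ℝ) * (1 : ℝ)) +
        ((|c2| - c2)/2) * ((1 : ℝ) * (1 : ℝ)) +
        ((|c3| + c3)/2) * ((1 : ℝ) * (1 : ℝ)) +
        ((|c3| - c3)/2) * ((-1 : ℝ) * (1 : ℝ)) +
        ((|c4| + c4)/2) * ((-1 : ℝ) * (1 : ℝ)) +
        ((|c4| - c4)/2) * ((1 : ℝ) * (1 : ℝ)) = c1 - c2 + c3 - c4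
    ring
  · show ((|c1| + c1)/2 + (1 - (|c1| + |c2| + |c3| + |c4|))/2) * ((1 : ℝ) * (1 : ℝ)) +
        ((|c1| - c1)/2 + (1 - (|c1| + |c2| + |c3| + |c4|))/2) * ((-1 : ℝ) * (1 : ℝ)) +
        ((|c2| + c2)/2) * ((-1 : ℝ) * (1 : ℝ)) +
        ((|c2| - c2)/2) * ((1 : ℝ) * (1 : ℝ)) +
        ((|c3| + c3)/2) * ((1 : ℝ) * (-1 : ℝ)) +
        ((|c3| - c3)/2) * ((-1 : ℝ) * (-1 : ℝ)) +
        ((|c4| + c4)/2) * ((-1 : ℝ) * (-1 : ℝ)) +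
        ((|c4| - c4)/2) * ((1 : ℝ) * (-1 : ℝ)) = c1 - c2 - c3 + c4
    ring

theorem unit_ball_subset_local_polytope_2x2 (r : Matrix (Fin 2) (Fin 2) ℝ)
    (hr : Real.sqrt (∑ x : Fin 2, ∑ y : Fin 2, r x y ^ 2) ≤ 1) :
    r ∈ convexHull ℝ {d : Matrix (Fin 2) (Fin 2) ℝ |
      ∃ a b : Fin 2 → ℝ, (∀ x, a x = 1 ∨ a x = -1) ∧ (∀ y, b y = 1 ∨ b y = -1) ∧
        d = fun x y => a x * b y} := by
  have hS : (r 0 0)^2 + (r 0 1)^2 + (r 1 0)^2 + (r 1 1)^2 ≤ 1 := by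
    have h0 : (0:ℝ) ≤ (r 0 0)^2 + (r 0 1)^2 + (r 1 0)^2 + (r 1 1)^2 := by positivity
    have h1 : Real.sqrt ((r 0 0)^2 + (r 0 1)^2 + (r 1 0)^2 + (r 1 1)^2) ≤ 1 := by
      simpa [Fin.sum_univ_two, add_assoc] using hr
    nlinarith [Real.sq_sqrt h0, Real.sqrt_nonneg ((r 0 0)^2 + (r 0 1)^2 + (r 1 0)^2 + (r 1 1)^2)]
  obtain ⟨c1, hc1⟩ : ∃ c : ℝ, c = (r 0 0 + r 0 1 + r 1 0 + r 1 1) / 4 := ⟨_, rfl⟩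
  obtain ⟨c2, hc2⟩ : ∃ c : ℝ, c = (r 0 0 + r 0 1 - r 1 0 - r 1 1) / 4 := ⟨_, rfl⟩
  obtain ⟨c3, hc3⟩ : ∃ c : ℝ, c = (r 0 0 - r 0 1 + r 1 0 - r 1 1) / 4 := ⟨_, rfl⟩
  obtain ⟨c4, hc4⟩ : ∃ c : ℝ, c = (r 0 0 - r 0 1 - r 1 0 + r 1 1) / 4 := ⟨_, rfl⟩
  have habs : |c1| + |c2| + |c3| + |c4| ≤ 1 := by
    have h4 : 4 * (c1^2 + c2^2 + c3^2 + c4^2) =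
        (r 0 0)^2 + (r 0 1)^2 + (r 1 0)^2 + (r 1 1)^2 := by
      rw [hc1, hc2, hc3, hc4]; ring
    nlinarith [abs_nonneg c1, abs_nonneg c2, abs_nonneg c3, abs_nonneg c4,
      sq_abs c1, sq_abs c2, sq_abs c3, sq_abs c4,
      sq_nonneg (|c1| - |c2|), sq_nonneg (|c1| - |c3|), sq_nonneg (|c1| - |c4|),
      sq_nonneg (|c2| - |c3|), sq_nonneg (|c2| - |c4|), sq_nonneg (|c3| - |c4|)]
  have hr' : r = ∑ i, lpW c1 c2 c3 c4 i • lpZ i := by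
    rw [lpW_combo]
    funext x y
    fin_cases x <;> fin_cases y
    · show r 0 0 = c1 + c2 + c3 + c4
      rw [hc1, hc2, hc3, hc4]; ring
    · show r 0 1 = c1 + c2 - c3 - c4
      rw [hc1, hc2, hc3, hc4]; ring
    · show r 1 0 = c1 - c2 + c3 - c4
      rw [hc1, hc2, hc3, hc4]; ring
    · show r 1 1 = c1 - c2 - c3 + c4
      rw [hc1, hc2, hc3, hc4]; ring
  rw [hr']
  exact (convex_convexHull ℝ _).sum_mem (lpW_nonneg c1 c2 c3 c4 habs) (lpW_sum c1 c2 c3 c4)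
    (fun i hi => subset_convexHull ℝ _ (lpZ_mem i hi))
end

section
/- Every real m×m matrix r with Frobenius norm at most 1 lies in the convex hull of the deterministic strategy matrices d_{a,b}, where d_{a,b} has entries aₓb_y for sign vectors a, b ∈ {−1,+1}^m. -/
/-!
By Hahn–Banach it suffices that every linear functional `l`, with coefficient matrix `c`, satisfies
`l r ≤ l d` for some deterministic strategy `d`. Cauchy–Schwarz gives `l r ≤ ‖c‖_F`. Averaging over
all sign vectors `ε`, the identity `𝔼_ε Σ_x (Σ_y c x y ε y)² = ‖c‖_F²` yields an `ε` with
`‖c ε‖₂ ≥ ‖c‖_F`, and `a = sign (c ε)` then gives `l (a εᵀ) = ‖c ε‖₁ ≥ ‖c ε‖₂ ≥ ‖c‖_F`.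
-/

open Finset Matrix

def IsSignVector {ι : Type*} (a : ι → ℝ) : Prop := ∀ x, a x = 1 ∨ a x = -1

theorem finite_setOf_isSignVector {ι : Type*} [Finite ι] : {a : ι → ℝ | IsSignVector a}.Finite :=
  Set.Finite.pi' fun _ => Set.toFinite {1, -1}

theorem exists_isSignVector_mul_eq_abs {ι : Type*} (w : ι → ℝ) :
    ∃ a, IsSignVector a ∧ ∀ x, a x * w x = |w x| := by
  refine ⟨fun x => if 0 ≤ w x then 1 else -1, fun x => ?_, fun x => ?_⟩ <;>
    by_cases h : 0 ≤ w x <;> simp [h, abs_of_nonneg, abs_of_neg, lt_of_not_ge]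

section Rademacher

variable {κ : Type*} [Fintype κ] [DecidableEq κ]

theorem sum_units_mul_units (y y' : κ) :
    ∑ ε : κ → ℤˣ, ((ε y : ℤ) : ℝ) * (ε y' : ℤ) =
      if y = y' then (Fintype.card (κ → ℤˣ) : ℝ) else 0 := by
  split_ifs with h
  · subst h
    simp [← Int.cast_mul, ← Units.val_mul, Int.units_mul_self]
  · -- Flipping the sign of `ε y` is a bijection of `κ → ℤˣ` that negates every term.
    have flip := Equiv.sum_comp (Equiv.mulLeft (Pi.mulSingle y (-1) : κ → ℤˣ))
      fun ε : κ → ℤˣ => ((ε y : ℤ) : ℝ) * (ε y' : ℤ)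
    simp only [Equiv.coe_mulLeft, Pi.mul_apply, Pi.mulSingle_eq_same,
      Pi.mulSingle_eq_of_ne (Ne.symm h), Units.val_neg, Int.cast_neg, neg_mul, one_mul, sum_neg_distrib] at flip
    linarith

theorem sum_sq_sum_mul_units (c : κ → ℝ) :
    ∑ ε : κ → ℤˣ, (∑ y, c y * (ε y : ℤ)) ^ 2 = Fintype.card (κ → ℤˣ) * ∑ y, c y ^ 2 := by
  calc ∑ ε : κ → ℤˣ, (∑ y, c y * (ε y : ℤ)) ^ 2
      = ∑ y, ∑ y', c y * c y' * ∑ ε : κ → ℤˣ, ((ε y : ℤ) : ℝ) * (ε y' : ℤ) := by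
        simp_rw [sq, sum_mul_sum, mul_sum]
        rw [sum_comm]
        refine sum_congr rfl fun y _ => ?_
        rw [sum_comm]
        refine sum_congr rfl fun y' _ => sum_congr rfl fun ε _ => by ring
    _ = Fintype.card (κ → ℤˣ) * ∑ y, c y ^ 2 := by
        simp [sum_units_mul_units, mul_sum, sq, mul_comm]

end Rademacher

section Matrix

variable {ι κ : Type*} [Fintype ι] [Fintype κ]

theorem exists_units_sum_sq_le [DecidableEq κ] (c : Matrix ι κ ℝ) :
    ∃ ε : κ → ℤˣ, ∑ x, ∑ y, c x y ^ 2 ≤ ∑ x, (∑ y, c x y * (ε y : ℤ)) ^ 2 := by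
  have average : ∑ ε : κ → ℤˣ, ∑ x, (∑ y, c x y * (ε y : ℤ)) ^ 2 =
      ∑ _ε : κ → ℤˣ, ∑ x, ∑ y, c x y ^ 2 := by
    rw [sum_comm, sum_const, card_univ, nsmul_eq_mul, mul_sum]
    exact sum_congr rfl fun x _ => sum_sq_sum_mul_units (c x)
  obtain ⟨ε, -, hε⟩ := exists_le_of_sum_le univ_nonempty average.ge
  exact ⟨ε, hε⟩

theorem Real.sqrt_sum_sq_le_sum_abs (w : ι → ℝ) : √(∑ x, w x ^ 2) ≤ ∑ x, |w x| := by
  rw [Real.sqrt_le_iff]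
  refine ⟨sum_nonneg fun x _ => abs_nonneg _, ?_⟩
  simpa only [sq_abs] using sum_sq_le_sq_sum_of_nonneg (s := univ) fun x _ => abs_nonneg (w x)

theorem exists_isSignVector_sqrt_sum_sq_le [DecidableEq κ] (c : Matrix ι κ ℝ) :
    ∃ a b, IsSignVector a ∧ IsSignVector b ∧
      √(∑ x, ∑ y, c x y ^ 2) ≤ ∑ x, ∑ y, c x y * vecMulVec a b x y := by
  obtain ⟨ε, hε⟩ := exists_units_sum_sq_le c
  set w : ι → ℝ := fun x => ∑ y, c x y * (ε y : ℤ)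
  obtain ⟨a, ha, haw⟩ := exists_isSignVector_mul_eq_abs w
  refine ⟨a, fun y => (ε y : ℤ), ha,
    fun y => by rcases Int.units_eq_one_or (ε y) with h | h <;> simp [h], ?_⟩
  calc √(∑ x, ∑ y, c x y ^ 2) ≤ √(∑ x, w x ^ 2) := Real.sqrt_le_sqrt hε
    _ ≤ ∑ x, |w x| := Real.sqrt_sum_sq_le_sum_abs w
    _ = ∑ x, ∑ y, c x y * vecMulVec a (fun y => ((ε y : ℤ) : ℝ)) x y := by
      refine sum_congr rfl fun x _ => ?_
      rw [← haw, mul_sum]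
      exact sum_congr rfl fun y _ => by rw [vecMulVec_apply]; ring

theorem Matrix.sum_sum_mul_le_sqrt_mul_sqrt (c r : Matrix ι κ ℝ) :
    ∑ x, ∑ y, c x y * r x y ≤ √(∑ x, ∑ y, c x y ^ 2) * √(∑ x, ∑ y, r x y ^ 2) := by
  simpa only [Fintype.sum_prod_type] using
    Real.sum_mul_le_sqrt_mul_sqrt univ (fun p : ι × κ => c p.1 p.2) fun p => r p.1 p.2

theorem Matrix.linearMap_apply_eq_sum [DecidableEq ι] [DecidableEq κ]
    (l : Matrix ι κ ℝ →ₗ[ℝ] ℝ) (r : Matrix ι κ ℝ) :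
    l r = ∑ x, ∑ y, l (single x y 1) * r x y := by
  conv_lhs => rw [matrix_eq_sum_single r]
  simp only [map_sum]
  refine sum_congr rfl fun x _ => sum_congr rfl fun y _ => ?_
  rw [mul_comm, ← smul_eq_mul, ← map_smul, smul_single, smul_eq_mul, mul_one]

def deterministicStrategies (ι κ : Type*) : Set (Matrix ι κ ℝ) :=
  {d | ∃ a b, IsSignVector a ∧ IsSignVector b ∧ d = vecMulVec a b}

theorem deterministicStrategies_finite : (deterministicStrategies ι κ).Finite :=
  (finite_setOf_isSignVector.image2 vecMulVec finite_setOf_isSignVector).subset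
    fun _ ⟨a, b, ha, hb, hd⟩ => ⟨a, ha, b, hb, hd.symm⟩

theorem exists_mem_deterministicStrategies_le [DecidableEq ι] [DecidableEq κ]
    {r : Matrix ι κ ℝ} (hr : √(∑ x, ∑ y, r x y ^ 2) ≤ 1) (l : Matrix ι κ ℝ →ₗ[ℝ] ℝ) :
    ∃ d ∈ deterministicStrategies ι κ, l r ≤ l d := by
  set c : Matrix ι κ ℝ := of fun x y => l (single x y 1)
  obtain ⟨a, b, ha, hb, hab⟩ := exists_isSignVector_sqrt_sum_sq_le c
  refine ⟨vecMulVec a b, ⟨a, b, ha, hb, rfl⟩, ?_⟩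
  rw [linearMap_apply_eq_sum l r, linearMap_apply_eq_sum l (vecMulVec a b)]
  calc ∑ x, ∑ y, c x y * r x y ≤ √(∑ x, ∑ y, c x y ^ 2) * √(∑ x, ∑ y, r x y ^ 2) :=
        sum_sum_mul_le_sqrt_mul_sqrt c r
    _ ≤ √(∑ x, ∑ y, c x y ^ 2) := mul_le_of_le_one_right (Real.sqrt_nonneg _) hr
    _ ≤ ∑ x, ∑ y, c x y * vecMulVec a b x y := hab

end Matrix

instance Matrix.instLocallyConvexSpace {ι κ : Type*} : LocallyConvexSpace ℝ (Matrix ι κ ℝ) :=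
  inferInstanceAs (LocallyConvexSpace ℝ (ι → κ → ℝ))

theorem mem_convexHull_deterministicStrategies {ι κ : Type*} [Fintype ι] [Fintype κ]
    {r : Matrix ι κ ℝ} (hr : √(∑ x, ∑ y, r x y ^ 2) ≤ 1) :
    r ∈ convexHull ℝ (deterministicStrategies ι κ) := by
  classical
  rw [← iInter_halfSpaces_eq (convex_convexHull ℝ _)
    (deterministicStrategies_finite.isClosed_convexHull ℝ), Set.mem_iInter]
  intro l
  obtain ⟨d, hd, hle⟩ := exists_mem_deterministicStrategies_le hr l.toLinearMap
  exact ⟨d, subset_convexHull ℝ _ hd, hle⟩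

theorem unit_ball_subset_local_polytope (m : ℕ) (r : Matrix (Fin m) (Fin m) ℝ)
    (hr : Real.sqrt (∑ x : Fin m, ∑ y : Fin m, r x y ^ 2) ≤ 1) :
    r ∈ convexHull ℝ {d : Matrix (Fin m) (Fin m) ℝ |
      ∃ a b : Fin m → ℝ, (∀ x, a x = 1 ∨ a x = -1) ∧ (∀ y, b y = 1 ∨ b y = -1) ∧
        d = fun x y => a x * b y} :=
  mem_convexHull_deterministicStrategies hr
end

section
/- If for every finite family of unit vectors (âᵢ) and (b̂ⱼ) in S² the correlation matrix with entries −v·(âᵢ · b̂ⱼ) lies in the local polytope, and η ∈ (0,1] is such that every shrunk unit vector η·û is a convex combination of a fixed finite set of unit vectors on which locality holds with visibility v₀, then the visibility η²v₀ admits a local model for all unit vectors. Formally: if the matrix (−v₀ aₓ·b_y)ₓ,y ∈ L_m and η x̂ ∈ conv{aₓ}, η ŷ ∈ conv{b_y} for all unit x̂, ŷ, then for any finite choice of unit vectors (x̂ᵢ), (ŷⱼ), the matrix (−η²v₀ x̂ᵢ·ŷⱼ) lies in the convex hull of deterministic strategies. -/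
open scoped RealInnerProductSpace

/-!
Write the shrunk vectors as convex combinations `η • x̂ᵢ = ∑ₓ Pᵢₓ • aₓ`, `η • ŷⱼ = ∑_y Qⱼ_y • b_y`
with `P`, `Q` row-stochastic. The target matrix is then `P * M * Qᵀ` for the local matrix
`M = (-v₀ ⟪aₓ, b_y⟫)`. The map `M ↦ P * M * Qᵀ` is linear and sends a deterministic strategy
`α βᵀ` to `(P α) (Q β)ᵀ`, an outer product of two vectors of the cube `[-1, 1]ⁿ`; since the cube is
the convex hull of the sign vectors, such outer products lie in the local polytope.
-/

open Set Matrix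

section ConvexHull

variable {E F G : Type*} [AddCommGroup E] [Module ℝ E] [AddCommGroup F] [Module ℝ F]
  [AddCommGroup G] [Module ℝ G]

theorem LinearMap.apply_mem_convexHull_image2 (f : E →ₗ[ℝ] F →ₗ[ℝ] G) {s : Set E} {t : Set F}
    {x : E} {y : F} (hx : x ∈ convexHull ℝ s) (hy : y ∈ convexHull ℝ t) :
    f x y ∈ convexHull ℝ (image2 (fun x y => f x y) s t) := by
  have hleft : ∀ y' ∈ t, f x y' ∈ convexHull ℝ (image2 (fun x y => f x y) s t) := by
    intro y' hy'
    have hxy' := (f.flip y').image_convexHull s ▸ mem_image_of_mem (f.flip y') hx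
    refine convexHull_mono ?_ hxy'
    rintro _ ⟨x', hx', rfl⟩
    exact mem_image2_of_mem hx' hy'
  have hxy := (f x).image_convexHull t ▸ mem_image_of_mem (f x) hy
  refine convexHull_min ?_ (convex_convexHull ℝ _) hxy
  rintro _ ⟨y', hy', rfl⟩
  exact hleft y' hy'

theorem mem_convexHull_range_iff_exists_stdSimplex {ι : Type*} [Fintype ι] {a : ι → E} {x : E} :
    x ∈ convexHull ℝ (range a) ↔ ∃ w ∈ stdSimplex ℝ ι, ∑ i, w i • a i = x := by
  classical
  have hrange : range a = Fintype.linearCombination ℝ a '' range fun i => Pi.single i 1 := by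
    rw [← range_comp]
    congr 1
    funext i
    simp [Fintype.linearCombination_apply_single]
  rw [hrange, ← LinearMap.image_convexHull, convexHull_rangle_single_eq_stdSimplex]
  simp [Fintype.linearCombination_apply]

end ConvexHull

def signVectors (ι : Type*) : Set (ι → ℝ) := {v | ∀ i, v i = 1 ∨ v i = -1}

theorem convexHull_signVectors (ι : Type*) [Finite ι] :
    convexHull ℝ (signVectors ι) = univ.pi fun _ => Icc (-1) 1 := by
  have hpi : signVectors ι = univ.pi fun _ => {1, -1} := by
    ext v; simp [signVectors, Set.mem_pi]
  rw [hpi, convexHull_pi, convexHull_pair, segment_symm, segment_eq_Icc (by norm_num)]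

def deterministicCorrelations (ι κ : Type*) : Set (Matrix ι κ ℝ) :=
  {d | ∃ (a' : ι → ℝ) (b' : κ → ℝ), (∀ i, a' i = 1 ∨ a' i = -1) ∧ (∀ j, b' j = 1 ∨ b' j = -1) ∧
    d = fun i j => a' i * b' j}

def localPolytope (ι κ : Type*) : Set (Matrix ι κ ℝ) :=
  convexHull ℝ (deterministicCorrelations ι κ)

variable {ι κ μ ν : Type*} [Fintype μ] [Fintype ν]

theorem mul_gram_mul_transpose {E : Type*} [NormedAddCommGroup E] [InnerProductSpace ℝ E]
    (P : Matrix ι μ ℝ) (Q : Matrix κ ν ℝ) (a : μ → E) (b : ν → E) :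
    P * Matrix.of (fun x y => ⟪a x, b y⟫) * Qᵀ =
      Matrix.of fun i j => ⟪∑ x, P i x • a x, ∑ y, Q j y • b y⟫ := by
  ext i j
  simp only [mul_apply, of_apply, transpose_apply, sum_inner, inner_sum, real_inner_smul_left,
    real_inner_smul_right, Finset.sum_mul]
  exact Finset.sum_congr rfl fun _ _ => Finset.sum_congr rfl fun _ _ => by ring

variable [Fintype ι] [Fintype κ]

theorem vecMulVec_mem_localPolytope {u : ι → ℝ} {v : κ → ℝ}
    (hu : ∀ i, u i ∈ Icc (-1) 1) (hv : ∀ j, v j ∈ Icc (-1) 1) :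
    vecMulVec u v ∈ localPolytope ι κ := by
  have hu' : u ∈ convexHull ℝ (signVectors ι) := by
    rw [convexHull_signVectors]; exact fun i _ => hu i
  have hv' : v ∈ convexHull ℝ (signVectors κ) := by
    rw [convexHull_signVectors]; exact fun j _ => hv j
  refine convexHull_mono ?_ ((vecMulVecBilin ℝ ℝ).apply_mem_convexHull_image2 hu' hv')
  rintro _ ⟨a', ha', b', hb', rfl⟩
  exact ⟨a', b', ha', hb', rfl⟩

theorem dotProduct_mem_Icc_of_mem_stdSimplex {w v : μ → ℝ} (hw : w ∈ stdSimplex ℝ μ)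
    (hv : ∀ x, v x ∈ Icc (-1) 1) : w ⬝ᵥ v ∈ Icc (-1) 1 :=
  (convex_Icc (-1) 1).sum_mem (fun x _ => hw.1 x) hw.2 fun x _ => hv x

theorem mul_mul_transpose_mem_localPolytope {P : Matrix ι μ ℝ} {Q : Matrix κ ν ℝ}
    (hP : ∀ i, P i ∈ stdSimplex ℝ μ) (hQ : ∀ j, Q j ∈ stdSimplex ℝ ν) {M : Matrix μ ν ℝ}
    (hM : M ∈ localPolytope μ ν) : P * M * Qᵀ ∈ localPolytope ι κ := by
  let L := mulRightLinearMap ι ℝ Qᵀ ∘ₗ mulLeftLinearMap ν ℝ P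
  have hLM := L.image_convexHull _ ▸ mem_image_of_mem L hM
  refine convexHull_min ?_ (convex_convexHull ℝ _) hLM
  rintro _ ⟨_, ⟨α, β, hα, hβ, rfl⟩, rfl⟩
  have hα' : ∀ x, α x ∈ Icc (-1) 1 := fun x => by rcases hα x with h | h <;> simp [h]
  have hβ' : ∀ y, β y ∈ Icc (-1) 1 := fun y => by rcases hβ y with h | h <;> simp [h]
  have hL : L (vecMulVec α β) = vecMulVec (P *ᵥ α) (Q *ᵥ β) := by
    simp [L, mul_vecMulVec, vecMulVec_mul, vecMul_transpose]
  exact hL ▸ vecMulVec_mem_localPolytope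
    (fun i => dotProduct_mem_Icc_of_mem_stdSimplex (hP i) hα')
    (fun j => dotProduct_mem_Icc_of_mem_stdSimplex (hQ j) hβ')

theorem lift_local_model_to_all_projective_general (m : ℕ) (η v₀ : ℝ)
    (a b : Fin m → EuclideanSpace ℝ (Fin 3))
    (hlocal : (fun x y => -v₀ * ⟪a x, b y⟫ : Matrix (Fin m) (Fin m) ℝ) ∈
      convexHull ℝ {d : Matrix (Fin m) (Fin m) ℝ |
        ∃ a' b' : Fin m → ℝ, (∀ x, a' x = 1 ∨ a' x = -1) ∧ (∀ y, b' y = 1 ∨ b' y = -1) ∧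
          d = fun x y => a' x * b' y})
    (hashrink : ∀ xhat : EuclideanSpace ℝ (Fin 3), ‖xhat‖ = 1 →
      η • xhat ∈ convexHull ℝ (Set.range a))
    (hbshrink : ∀ yhat : EuclideanSpace ℝ (Fin 3), ‖yhat‖ = 1 →
      η • yhat ∈ convexHull ℝ (Set.range b)) :
    ∀ (k l : ℕ) (xhat : Fin k → EuclideanSpace ℝ (Fin 3))
      (yhat : Fin l → EuclideanSpace ℝ (Fin 3)),
      (∀ i, ‖xhat i‖ = 1) → (∀ j, ‖yhat j‖ = 1) →
      (fun i j => -(η ^ 2 * v₀) * ⟪xhat i, yhat j⟫ : Matrix (Fin k) (Fin l) ℝ) ∈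
        convexHull ℝ {d : Matrix (Fin k) (Fin l) ℝ |
          ∃ (a' : Fin k → ℝ) (b' : Fin l → ℝ),
            (∀ i, a' i = 1 ∨ a' i = -1) ∧ (∀ j, b' j = 1 ∨ b' j = -1) ∧
            d = fun i j => a' i * b' j} := by
  intro k l xhat yhat hxunit hyunit
  choose P hP hPa using fun i =>
    mem_convexHull_range_iff_exists_stdSimplex.mp (hashrink (xhat i) (hxunit i))
  choose Q hQ hQb using fun j =>
    mem_convexHull_range_iff_exists_stdSimplex.mp (hbshrink (yhat j) (hyunit j))
  have hmodel : Matrix.of (fun i j => -(η ^ 2 * v₀) * ⟪xhat i, yhat j⟫) =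
      Matrix.of P * Matrix.of (fun x y => -v₀ * ⟪a x, b y⟫) * (Matrix.of Q)ᵀ := by
    rw [show Matrix.of (fun x y => -v₀ * ⟪a x, b y⟫) = -v₀ • Matrix.of fun x y => ⟪a x, b y⟫
      from rfl, Matrix.mul_smul, Matrix.smul_mul, mul_gram_mul_transpose]
    ext i j
    simp only [neg_mul, of_apply, hPa, hQb, real_inner_smul_right, real_inner_smul_left,
      Matrix.smul_apply, smul_eq_mul, neg_inj]
    ring
  exact (congrArg (· ∈ localPolytope (Fin k) (Fin l)) hmodel).mpr
    (mul_mul_transpose_mem_localPolytope hP hQ hlocal)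

theorem lift_local_model_to_all_projective (m : ℕ) (η v₀ : ℝ) (hη : 0 < η) (hη1 : η ≤ 1)
    (a b : Fin m → EuclideanSpace ℝ (Fin 3))
    (haunit : ∀ x, ‖a x‖ = 1) (hbunit : ∀ y, ‖b y‖ = 1)
    (hlocal : (fun x y => -v₀ * ⟪a x, b y⟫ : Matrix (Fin m) (Fin m) ℝ) ∈
      convexHull ℝ {d : Matrix (Fin m) (Fin m) ℝ |
        ∃ a' b' : Fin m → ℝ, (∀ x, a' x = 1 ∨ a' x = -1) ∧ (∀ y, b' y = 1 ∨ b' y = -1) ∧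
          d = fun x y => a' x * b' y})
    (hashrink : ∀ xhat : EuclideanSpace ℝ (Fin 3), ‖xhat‖ = 1 →
      η • xhat ∈ convexHull ℝ (Set.range a))
    (hbshrink : ∀ yhat : EuclideanSpace ℝ (Fin 3), ‖yhat‖ = 1 →
      η • yhat ∈ convexHull ℝ (Set.range b)) :
    ∀ (k l : ℕ) (xhat : Fin k → EuclideanSpace ℝ (Fin 3))
      (yhat : Fin l → EuclideanSpace ℝ (Fin 3)),
      (∀ i, ‖xhat i‖ = 1) → (∀ j, ‖yhat j‖ = 1) →
      (fun i j => -(η ^ 2 * v₀) * ⟪xhat i, yhat j⟫ : Matrix (Fin k) (Fin l) ℝ) ∈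
        convexHull ℝ {d : Matrix (Fin k) (Fin l) ℝ |
          ∃ (a' : Fin k → ℝ) (b' : Fin l → ℝ),
            (∀ i, a' i = 1 ∨ a' i = -1) ∧ (∀ j, b' j = 1 ∨ b' j = -1) ∧
            d = fun i j => a' i * b' j} :=
  lift_local_model_to_all_projective_general m η v₀ a b hlocal hashrink hbshrink
end
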